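/- arXiv:2112.11595 — 2 statements merged into one kernel-verified Lean document; each statement's English description precedes it below -/
import Mathlib

section
/- Let T_k satisfy T_k = 1 + z·T_k^k (generating function of k-ary trees) and let f = z·T_k(z^{2k-1}). Then f - z = (z·f)^k, so the B-function of f is B_f(z) = z^{k-1}. -/
open PowerSeries

/-- Composition `f ∘ g` of formal power series (meaningful when the constant
coefficient of `g` is zero). -/
noncomputable def comp (f g : PowerSeries ℚ) : PowerSeries ℚ :=
  PowerSeries.mk fun n =>
    ∑ i ∈ Finset.range (n + 1), (PowerSeries.coeff (R := ℚ) i f) * (PowerSeries.coeff (R := ℚ) n (g ^ i))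

/-- A formal power series `f` is pseudo-involutory when its compositional
inverse is `-f(-z)`. -/
def PseudoInvolutory (f : PowerSeries ℚ) : Prop :=
  comp f (-(comp f (-X))) = X ∧ comp (-(comp f (-X))) f = X

/-!
Substituting `z^(2k-1)` into `T = 1 + z T^k` gives `A = 1 + z^(2k-1) A^k` for `A = T(z^(2k-1))`,
hence `z A - z = z^(2k) A^k = (z · z A)^k`. The truncated-sum `comp` agrees with Mathlib's
`PowerSeries.subst` once the inner series has no constant term, and `subst` is an algebra map.
-/

theorem comp_eq_subst {f g : PowerSeries ℚ} (hg : constantCoeff g = 0) :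
    comp f g = f.subst g := by
  ext n
  rw [comp, coeff_mk, coeff_subst' (HasSubst.of_constantCoeff_zero' hg)]
  refine (finsum_eq_sum_of_support_subset _ fun d hd => ?_).symm
  rw [Finset.coe_range, Set.mem_Iio, Nat.lt_succ_iff]
  by_contra! hnd
  refine hd ?_
  show coeff d f * coeff n (g ^ d) = 0
  refine mul_eq_zero_of_right _ (coeff_of_lt_order n ?_)
  calc (n : ℕ∞) < d := by exact_mod_cast hnd
    _ ≤ (g ^ d).order := le_order_pow_of_constantCoeff_eq_zero d hg

theorem comp_X_pow {g : PowerSeries ℚ} (hg : constantCoeff g = 0) (m : ℕ) :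
    comp (X ^ m) g = g ^ m := by
  have hsubst := HasSubst.of_constantCoeff_zero' hg
  rw [comp_eq_subst hg, subst_pow hsubst, subst_X hsubst]

section

variable {R : Type*} [CommRing R] {k : ℕ} {T : PowerSeries R}

theorem subst_eq_one_add_mul_pow (hT : T = 1 + X * T ^ k) {a : PowerSeries R}
    (ha : HasSubst a) : T.subst a = 1 + a * T.subst a ^ k := by
  rw [← coe_substAlgHom ha]
  conv_lhs => rw [hT]
  rw [map_add, map_one, map_mul, map_pow, substAlgHom_X]

theorem X_mul_subst_X_pow_sub_X (hk : 1 ≤ k) (hT : T = 1 + X * T ^ k) :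
    X * T.subst (X ^ (2 * k - 1) : PowerSeries R) - X =
      (X * (X * T.subst (X ^ (2 * k - 1) : PowerSeries R))) ^ k := by
  set A := T.subst (X ^ (2 * k - 1) : PowerSeries R)
  have hA : A = 1 + X ^ (2 * k - 1) * A ^ k :=
    subst_eq_one_add_mul_pow hT (HasSubst.X_pow (by omega))
  have hX : (X : PowerSeries R) * X ^ (2 * k - 1) = X ^ k * X ^ k := by
    rw [← pow_succ', ← pow_add]
    congr 1
    omega
  calc X * A - X = X * X ^ (2 * k - 1) * A ^ k := by
        conv_lhs => rw [hA]
        ring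
    _ = (X * (X * A)) ^ k := by
        rw [hX]
        ring

end

/-- For the `k`-ary tree generating function `T_k = 1 + z·T_k^k` and the
aerated series `f = z·T_k(z^{2k-1})`, we have `f - z = (z·f)^k`; hence the
`B`-function of `f` is `B_f(z) = z^{k-1}`. -/
theorem kary_tree_aerated_B (k : ℕ) (hk : 1 ≤ k) (T : PowerSeries ℚ)
    (hT : T = 1 + X * T ^ k) :
    (X * comp T (X ^ (2 * k - 1))) - X = (X * (X * comp T (X ^ (2 * k - 1)))) ^ k ∧
      (X * comp T (X ^ (2 * k - 1))) - X =
        X * (X * comp T (X ^ (2 * k - 1))) *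
          comp ((X : PowerSeries ℚ) ^ (k - 1)) (X * (X * comp T (X ^ (2 * k - 1)))) := by
  have hgap : constantCoeff (X ^ (2 * k - 1) : PowerSeries ℚ) = 0 := by
    rw [map_pow, constantCoeff_X, zero_pow (by omega)]
  have key := X_mul_subst_X_pow_sub_X hk hT
  rw [← comp_eq_subst hgap] at key
  have hf : constantCoeff (X * (X * comp T (X ^ (2 * k - 1)))) = 0 := by simp
  refine ⟨key, ?_⟩
  rw [comp_X_pow hf, ← pow_succ', Nat.sub_add_cancel hk, key]
end

section
/- Let h be an invertible formal power series (order 1, unit leading coefficient), and define its pseudo-inverse ĥ = (-z)∘h̄∘(-z) where h̄ is the compositional inverse. If (g,f) is a Riordan pseudo-involution, then (g∘h, ĥ∘f∘h) is also a pseudo-involution. -/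
/-!
Write `negConj p = (-z) ∘ p ∘ (-z)`. This is an involution that fixes `z` and respects
composition, and `f` is pseudo-involutory exactly when `negConj f` is the compositional inverse
of `f`. Hence `negConj (ĥ ∘ f ∘ h) = h̄ ∘ negConj f ∘ negConj h` is the inverse of
`ĥ ∘ f ∘ h`, since `ĥ = negConj h̄` is the inverse of `negConj h`. For the first component,
`-(ĥ ∘ F) = h̄ ∘ (-F)` when `F(0) = 0`, so
`(g ∘ h) ∘ (-(ĥ ∘ f ∘ h)) = (g ∘ (-f)) ∘ h = g⁻¹ ∘ h = (g ∘ h)⁻¹`.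
-/

open PowerSeries

theorem comp_eq_subst_s17 {b : PowerSeries ℚ} (hb : constantCoeff b = 0) (a : PowerSeries ℚ) :
    comp a b = a.subst b := by
  ext n
  rw [coeff_subst' (HasSubst.of_constantCoeff_zero' hb), comp, coeff_mk,
    finsum_eq_sum_of_support_subset (s := Finset.range (n + 1))]
  · simp only [smul_eq_mul]
  · intro d hd
    rw [Function.mem_support] at hd
    rw [Finset.coe_range, Set.mem_Iio, Nat.lt_succ_iff]
    by_contra! hnd
    refine hd ?_
    rw [coeff_of_lt_order n, smul_zero]
    exact (Nat.cast_lt.mpr hnd).trans_le (le_order_pow_of_constantCoeff_eq_zero d hb)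

@[simp]
theorem constantCoeff_comp (a b : PowerSeries ℚ) :
    constantCoeff (comp a b) = constantCoeff a := by
  rw [← coeff_zero_eq_constantCoeff_apply, ← coeff_zero_eq_constantCoeff_apply, comp, coeff_mk]
  simp

theorem neg_comp (a b : PowerSeries ℚ) : comp (-a) b = -comp a b := by
  ext n
  simp [comp, Finset.sum_neg_distrib]

theorem comp_X (a : PowerSeries ℚ) : comp a X = a := by
  rw [comp_eq_subst_s17 constantCoeff_X, X_subst]

theorem X_comp {b : PowerSeries ℚ} (hb : constantCoeff b = 0) : comp X b = b := by
  rw [comp_eq_subst_s17 hb, subst_X (HasSubst.of_constantCoeff_zero' hb)]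

theorem mul_comp {c : PowerSeries ℚ} (hc : constantCoeff c = 0) (a b : PowerSeries ℚ) :
    comp (a * b) c = comp a c * comp b c := by
  simp only [comp_eq_subst_s17 hc, subst_mul (HasSubst.of_constantCoeff_zero' hc)]

theorem one_comp (c : PowerSeries ℚ) : comp 1 c = 1 := by
  ext n
  simp [comp, coeff_one]

theorem comp_assoc {b c : PowerSeries ℚ} (hb : constantCoeff b = 0) (hc : constantCoeff c = 0)
    (a : PowerSeries ℚ) : comp (comp a b) c = comp a (comp b c) := by
  have hbc : constantCoeff (comp b c) = 0 := by simp [hb]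
  rw [comp_eq_subst_s17 hbc, comp_eq_subst_s17 hb, comp_eq_subst_s17 hc, comp_eq_subst_s17 hc,
    subst_comp_subst_apply (HasSubst.of_constantCoeff_zero' hb)
      (HasSubst.of_constantCoeff_zero' hc)]

theorem inv_comp {c : PowerSeries ℚ} (hc : constantCoeff c = 0) (a : PowerSeries ℚ) :
    comp a⁻¹ c = (comp a c)⁻¹ := by
  by_cases ha : constantCoeff a = 0
  · rw [PowerSeries.inv_eq_zero.mpr ha, PowerSeries.inv_eq_zero.mpr (by rwa [constantCoeff_comp])]
    ext n
    simp [comp]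
  · rw [PowerSeries.eq_inv_iff_mul_eq_one (by rwa [constantCoeff_comp]), ← mul_comp hc,
      PowerSeries.inv_mul_cancel a ha]
    exact one_comp c

noncomputable def negConj (p : PowerSeries ℚ) : PowerSeries ℚ := -comp p (-X)

@[simp]
theorem constantCoeff_negConj (p : PowerSeries ℚ) :
    constantCoeff (negConj p) = -constantCoeff p := by
  rw [negConj, map_neg, constantCoeff_comp]

theorem neg_X_comp {b : PowerSeries ℚ} (hb : constantCoeff b = 0) : comp (-X) b = -b := by
  rw [neg_comp, X_comp hb]

theorem negConj_X : negConj X = X := by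
  rw [negConj, X_comp (by simp), neg_neg]

theorem negConj_negConj (p : PowerSeries ℚ) : negConj (negConj p) = p := by
  have hX : constantCoeff (-X : PowerSeries ℚ) = 0 := by simp
  rw [negConj, negConj, neg_comp, neg_neg, comp_assoc hX hX, neg_X_comp hX, neg_neg, comp_X]

theorem negConj_comp {q : PowerSeries ℚ} (hq : constantCoeff q = 0) (p : PowerSeries ℚ) :
    negConj (comp p q) = comp (negConj p) (negConj q) := by
  have hX : constantCoeff (-X : PowerSeries ℚ) = 0 := by simp
  have hq' : constantCoeff (negConj q) = 0 := by simp [hq]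
  rw [negConj, negConj, neg_comp, comp_assoc hX hq', neg_X_comp hq', negConj, neg_neg,
    comp_assoc hq hX]

def IsCompInverse (p q : PowerSeries ℚ) : Prop := comp p q = X ∧ comp q p = X

namespace IsCompInverse

variable {p q p' q' : PowerSeries ℚ}

theorem constantCoeff_left (h : IsCompInverse p q) : constantCoeff p = 0 := by
  rw [← constantCoeff_comp p q, h.1, constantCoeff_X]

theorem symm (h : IsCompInverse p q) : IsCompInverse q p := And.symm h

theorem constantCoeff_right (h : IsCompInverse p q) : constantCoeff q = 0 :=
  h.symm.constantCoeff_left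

theorem comp_cancel_left (h : IsCompInverse p q) {r : PowerSeries ℚ} (hr : constantCoeff r = 0) :
    comp p (comp q r) = r := by
  rw [← comp_assoc h.constantCoeff_right hr, h.1, X_comp hr]

theorem comp (hp : IsCompInverse p p') (hq : IsCompInverse q q') :
    IsCompInverse (_root_.comp p q) (_root_.comp q' p') := by
  constructor
  · rw [comp_assoc hq.constantCoeff_left (by simp [hq.constantCoeff_right]),
      hq.comp_cancel_left hp.constantCoeff_right, hp.1]
  · rw [comp_assoc hp.constantCoeff_right (by simp [hp.constantCoeff_left]),
      hp.symm.comp_cancel_left hq.constantCoeff_left, hq.2]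

theorem negConj (h : IsCompInverse p q) : IsCompInverse (_root_.negConj p) (_root_.negConj q) := by
  constructor
  · rw [← negConj_comp h.constantCoeff_right, h.1, negConj_X]
  · rw [← negConj_comp h.constantCoeff_left, h.2, negConj_X]

end IsCompInverse

theorem pseudoInvolutory_iff_isCompInverse (f : PowerSeries ℚ) :
    PseudoInvolutory f ↔ IsCompInverse f (negConj f) := Iff.rfl

theorem PseudoInvolutory.conj {f k kbar : PowerSeries ℚ} (hf : PseudoInvolutory f)
    (hk : IsCompInverse k kbar) : PseudoInvolutory (comp (negConj kbar) (comp f k)) := by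
  rw [pseudoInvolutory_iff_isCompInverse] at hf ⊢
  have hfk := hf.comp hk
  have hnegConj : negConj (comp (negConj kbar) (comp f k)) =
      comp (comp kbar (negConj f)) (negConj k) := by
    rw [negConj_comp hfk.constantCoeff_left, negConj_negConj, negConj_comp hk.constantCoeff_left,
      comp_assoc hf.constantCoeff_right hk.negConj.constantCoeff_left]
  rw [hnegConj]
  exact hk.symm.negConj.comp hfk

theorem neg_comp_negConj {r : PowerSeries ℚ} (hr : constantCoeff r = 0) (p : PowerSeries ℚ) :
    -comp (negConj p) r = comp p (-r) := by
  rw [negConj, neg_comp, neg_neg, comp_assoc (by simp) hr, neg_X_comp hr]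

def IsRiordanPseudoInvolution (g f : PowerSeries ℚ) : Prop :=
  PseudoInvolutory f ∧ comp g (-f) = g⁻¹

theorem IsRiordanPseudoInvolution.conj {g f k kbar : PowerSeries ℚ}
    (hgf : IsRiordanPseudoInvolution g f) (hk : IsCompInverse k kbar) :
    IsRiordanPseudoInvolution (comp g k) (comp (negConj kbar) (comp f k)) := by
  obtain ⟨hf, hg⟩ := hgf
  have hf0 : constantCoeff f = 0 :=
    ((pseudoInvolutory_iff_isCompInverse f).mp hf).constantCoeff_left
  have hk0 := hk.constantCoeff_left
  have hkbar0 := hk.constantCoeff_right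
  refine ⟨hf.conj hk, ?_⟩
  calc comp (comp g k) (-comp (negConj kbar) (comp f k))
      = comp (comp g k) (comp kbar (comp (-f) k)) := by
        rw [neg_comp_negConj (by simp [hf0]), neg_comp]
    _ = comp (comp g (-f)) k := by
        rw [comp_assoc hk0 (by simp [hkbar0]), hk.comp_cancel_left (by simp [hf0]),
          comp_assoc (by simp [hf0]) hk0]
    _ = (comp g k)⁻¹ := by rw [hg, inv_comp hk0]

theorem pseudo_conjugation_general (g f h hbar : PowerSeries ℚ)
    (hinv1 : comp h hbar = X) (hinv2 : comp hbar h = X)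
    (hfpi : PseudoInvolutory f)
    (hgf : comp g (-f) = g⁻¹) :
    PseudoInvolutory (comp (-(comp hbar (-X))) (comp f h)) ∧
      comp (comp g h) (-(comp (-(comp hbar (-X))) (comp f h))) = (comp g h)⁻¹ :=
  IsRiordanPseudoInvolution.conj ⟨hfpi, hgf⟩ ⟨hinv1, hinv2⟩

/-- Pseudo-conjugation: let `h` be an invertible power series (order 1, unit
leading coefficient) with compositional inverse `hbar`, and let
`ĥ = (-z)∘hbar∘(-z)` be its pseudo-inverse.  If `(g, f)` is a Riordan
pseudo-involution (i.e. `f` is pseudo-involutory and `g∘(-f) = 1/g`), then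
`(g∘h, ĥ∘f∘h)` is also a pseudo-involution. -/
theorem pseudo_conjugation (g f h hbar : PowerSeries ℚ)
    (hg0 : PowerSeries.constantCoeff (R := ℚ) g = 1)
    (hh0 : PowerSeries.constantCoeff (R := ℚ) h = 0)
    (hh1 : PowerSeries.coeff (R := ℚ) 1 h ≠ 0)
    (hinv1 : comp h hbar = X) (hinv2 : comp hbar h = X)
    (hfpi : PseudoInvolutory f)
    (hgf : comp g (-f) = g⁻¹) :
    PseudoInvolutory (comp (-(comp hbar (-X))) (comp f h)) ∧
      comp (comp g h) (-(comp (-(comp hbar (-X))) (comp f h))) = (comp g h)⁻¹ :=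
  pseudo_conjugation_general g f h hbar hinv1 hinv2 hfpi hgf
end
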